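/- arXiv:2308.00516 — 8 statements merged into one kernel-verified Lean document; each statement's English description precedes it below -/
import Mathlib

section
/- For $\lambda > 1$ and even positive integers $p > s$, the arithmetic mean of $1, \lambda, \ldots, \lambda^{p+s-1}$ is at least the arithmetic mean of $\lambda^{s}, \lambda^{s+1}, \ldots, \lambda^{p-1}$; equivalently, $\frac{\lambda^{p+s}-1}{p+s} \geq \frac{\lambda^{p}-\lambda^{s}}{p-s}$. -/
/-!
Dividing by `λ - 1`, the claim compares the mean of `λ^s, …, λ^(p-1)` with the mean of
`1, …, λ^(p+s-1)`. Pair each exponent `k` with its mirror image `p + s - 1 - k`: for `λ ≥ 1` the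
pair sum `λ^k + λ^(p+s-1-k)` grows as `k` moves away from the centre, so every pair from the
outer blocks `[0, s)` and `[p, p+s)` dominates every pair from the inner block `[s, p)`. Hence
the outer mean dominates the inner one, and so does the mean over all exponents.
-/

open Finset

variable {R : Type*} [CommRing R] [PartialOrder R] [IsOrderedRing R]

theorem pow_add_pow_le_pow_add_pow {x : R} (hx : 1 ≤ x) {a b c d : ℕ} (hac : a ≤ c)
    (had : a ≤ d) (h : c + d = a + b) : x ^ c + x ^ d ≤ x ^ a + x ^ b := by
  obtain ⟨u, rfl⟩ := exists_add_of_le hac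
  obtain ⟨v, rfl⟩ := exists_add_of_le had
  obtain rfl : b = a + u + v := by omega
  have : 0 ≤ x ^ a * ((x ^ u - 1) * (x ^ v - 1)) :=
    mul_nonneg (pow_nonneg (zero_le_one.trans hx) a)
      (mul_nonneg (sub_nonneg.2 (one_le_pow₀ hx)) (sub_nonneg.2 (one_le_pow₀ hx)))
  simp only [pow_add] at this ⊢
  linear_combination this

theorem card_nsmul_sum_le_card_nsmul_sum {ι M : Type*} [AddCommMonoid M] [PartialOrder M]
    [IsOrderedAddMonoid M] {A B : Finset ι} {f g : ι → M}
    (h : ∀ i ∈ A, ∀ j ∈ B, g j ≤ f i) : #A • ∑ j ∈ B, g j ≤ #B • ∑ i ∈ A, f i :=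
  calc #A • ∑ j ∈ B, g j = ∑ i ∈ A, ∑ j ∈ B, g j := by rw [sum_const]
    _ ≤ ∑ i ∈ A, ∑ j ∈ B, f i := sum_le_sum fun i hi => sum_le_sum fun j hj => h i hi j hj
    _ = #B • ∑ i ∈ A, f i := by simp only [sum_const, smul_sum]

theorem two_mul_nsmul_sum_inner_le_nsmul_sum_outer {x : R} (hx : 1 ≤ x) (s m : ℕ) :
    (2 * s) • ∑ k ∈ range m, x ^ (s + k) ≤
      m • (∑ i ∈ range s, x ^ i + ∑ i ∈ range s, x ^ (s + m + i)) := by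
  have inner : ∑ k ∈ range m, (x ^ (s + k) + x ^ (s + (m - 1 - k))) =
      2 • ∑ k ∈ range m, x ^ (s + k) := by
    rw [sum_add_distrib, two_nsmul, sum_range_reflect (fun k => x ^ (s + k)) m]
  have outer : ∑ i ∈ range s, (x ^ i + x ^ (s + m + (s - 1 - i))) =
      ∑ i ∈ range s, x ^ i + ∑ i ∈ range s, x ^ (s + m + i) := by
    rw [sum_add_distrib, sum_range_reflect (fun i => x ^ (s + m + i)) s]
  have pairs := card_nsmul_sum_le_card_nsmul_sum (A := range s) (B := range m)
    (f := fun i => x ^ i + x ^ (s + m + (s - 1 - i)))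
    (g := fun k => x ^ (s + k) + x ^ (s + (m - 1 - k))) fun i hi k hk => by
      simp only [mem_range] at hi hk
      exact pow_add_pow_le_pow_add_pow hx (by omega) (by omega) (by omega)
  simp only [card_range] at pairs
  rwa [inner, outer, smul_smul, mul_comm] at pairs

theorem add_mul_pow_sub_pow_le {x : R} (hx : 1 ≤ x) {s p : ℕ} (hsp : s ≤ p) :
    ((p : R) + s) * (x ^ p - x ^ s) ≤ ((p : R) - s) * (x ^ (p + s) - 1) := by
  obtain ⟨m, rfl⟩ := exists_add_of_le hsp
  have outer_mean_ge := mul_le_mul_of_nonneg_right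
    (two_mul_nsmul_sum_inner_le_nsmul_sum_outer hx s m) (sub_nonneg.2 hx)
  have inner : (∑ k ∈ range m, x ^ (s + k)) * (x - 1) = x ^ s * (x ^ m - 1) := by
    simp only [pow_add, ← mul_sum, mul_assoc, geom_sum_mul]
  have outer : (∑ i ∈ range s, x ^ i + ∑ i ∈ range s, x ^ (s + m + i)) * (x - 1) =
      (1 + x ^ (s + m)) * (x ^ s - 1) := by
    rw [← geom_sum_mul]
    simp only [pow_add _ (s + m), ← mul_sum]
    ring
  simp only [nsmul_eq_mul, mul_assoc, inner, outer] at outer_mean_ge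
  push_cast at outer_mean_ge ⊢
  simp only [pow_add] at outer_mean_ge ⊢
  linear_combination outer_mean_ge

theorem stmt1_general (lam : ℝ) (hlam : 1 < lam) (p s : ℕ) (hsp : s < p) :
    (lam ^ p - lam ^ s) / ((p : ℝ) - (s : ℝ)) ≤ (lam ^ (p + s) - 1) / ((p : ℝ) + (s : ℝ)) := by
  have hdiff : (0 : ℝ) < p - s := sub_pos.2 (mod_cast hsp)
  have hsum : (0 : ℝ) < p + s := by linarith [(s.cast_nonneg : (0 : ℝ) ≤ s)]
  rw [div_le_div_iff₀ hdiff hsum]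
  linarith [add_mul_pow_sub_pow_le hlam.le hsp.le]

theorem stmt1 (lam : ℝ) (hlam : 1 < lam) (p s : ℕ) (hp : Even p) (hs : Even s)
    (hs0 : 0 < s) (hsp : s < p) :
    (lam ^ p - lam ^ s) / ((p : ℝ) - (s : ℝ)) ≤ (lam ^ (p + s) - 1) / ((p : ℝ) + (s : ℝ)) :=
  stmt1_general lam hlam p s hsp
end

section
/- For every $\alpha \in (1, 3/2]$ and every $\lambda > 1$, we have $\frac{\lambda^{\alpha-1} - \lambda^{2-\alpha}}{\lambda - 1} \geq 2\alpha - 3$. -/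
/-!
Write `λ = e^{2u}` with `u > 0` and `s = 3 - 2α ∈ [0, 1)`. Then `λ^{2-α} - λ^{α-1} = 2√λ sinh(su)`
and `λ - 1 = 2√λ sinh u`, so the inequality is `sinh(su) ≤ s sinh u`, which holds because `sinh`
is convex on `[0, ∞)` and vanishes at `0`.
-/

open Real Set

theorem convexOn_sinh_Ici : ConvexOn ℝ (Ici 0) sinh :=
  MonotoneOn.convexOn_of_deriv (convex_Ici 0) continuous_sinh.continuousOn
    differentiable_sinh.differentiableOn
    (Real.deriv_sinh ▸ cosh_strictMonoOn.monotoneOn.mono interior_subset)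

theorem ConvexOn.map_smul_le_smul_of_map_zero_nonpos {E : Type*} [AddCommGroup E] [Module ℝ E]
    {s : Set E} {f : E → ℝ} (hf : ConvexOn ℝ s f) (h0 : (0 : E) ∈ s) (hf0 : f 0 ≤ 0)
    {x : E} (hx : x ∈ s) {t : ℝ} (ht0 : 0 ≤ t) (ht1 : t ≤ 1) : f (t • x) ≤ t * f x := by
  have h := hf.2 hx h0 ht0 (sub_nonneg.2 ht1) (add_sub_cancel t 1)
  simp only [smul_zero, add_zero, smul_eq_mul] at h
  nlinarith

theorem sinh_mul_le_mul_sinh {t x : ℝ} (ht0 : 0 ≤ t) (ht1 : t ≤ 1) (hx : 0 ≤ x) :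
    sinh (t * x) ≤ t * sinh x :=
  convexOn_sinh_Ici.map_smul_le_smul_of_map_zero_nonpos self_mem_Ici sinh_zero.le hx ht0 ht1

theorem rpow_sub_rpow_eq_mul_sinh {x : ℝ} (hx : 0 < x) (a b : ℝ) :
    x ^ a - x ^ b = 2 * x ^ ((a + b) / 2) * sinh ((a - b) / 2 * log x) := by
  simp only [rpow_def_of_pos hx, sinh_eq]
  field_simp
  rw [mul_sub, ← exp_add, ← exp_add]
  ring_nf

theorem stmt2 (α lam : ℝ) (hα : α ∈ Set.Ioc 1 (3/2)) (hlam : 1 < lam) :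
    2 * α - 3 ≤ (lam ^ (α - 1) - lam ^ (2 - α)) / (lam - 1) := by
  obtain ⟨hα1, hα2⟩ := hα
  have hlam0 : 0 < lam := by linarith
  have hsinh : sinh ((3 - 2 * α) * (log lam / 2)) ≤ (3 - 2 * α) * sinh (log lam / 2) :=
    sinh_mul_le_mul_sinh (by linarith) (by linarith) (by have := log_pos hlam; positivity)
  have hnum : lam ^ (2 - α) - lam ^ (α - 1) =
      2 * lam ^ (1 / 2 : ℝ) * sinh ((3 - 2 * α) * (log lam / 2)) := by
    rw [rpow_sub_rpow_eq_mul_sinh hlam0]; ring_nf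
  have hden : lam - 1 = 2 * lam ^ (1 / 2 : ℝ) * sinh (log lam / 2) := by
    convert rpow_sub_rpow_eq_mul_sinh hlam0 1 0 using 3 <;> norm_num [div_eq_inv_mul]
  have hscaled := mul_le_mul_of_nonneg_left hsinh (by positivity : 0 ≤ 2 * lam ^ (1 / 2 : ℝ))
  rw [le_div_iff₀ (by linarith), hden]
  linarith
end

section
/- The logarithmic mean $\theta_1(s,t)$ (defined as $(s-t)/(\log s - \log t)$ for $s \neq t$, and $s$ for $s = t$) is a concave function on $(0,\infty) \times (0,\infty)$. -/
/-!
The logarithmic mean is an average of weighted geometric means: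
`logMean s t = ∫₀¹ s ^ u * t ^ (1 - u) du`, since `s ^ u * t ^ (1 - u) / (log s - log t)` is an
antiderivative. For `0 ≤ u ≤ 1` the weighted geometric mean `(s, t) ↦ s ^ u * t ^ (1 - u)` lies below
each of its tangent planes by weighted AM-GM, hence is concave on the open quadrant, and an
integral of concave functions is concave.
-/

open Real Set MeasureTheory

theorem concaveOn_integral {E α : Type*} [AddCommGroup E] [Module ℝ E] [MeasurableSpace α]
    {μ : Measure α} {s : Set E} {f : α → E → ℝ} (hs : Convex ℝ s)
    (hf : ∀ᵐ u ∂μ, ConcaveOn ℝ s (f u)) (hint : ∀ x ∈ s, Integrable (fun u => f u x) μ) :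
    ConcaveOn ℝ s (fun x => ∫ u, f u x ∂μ) := by
  refine ⟨hs, fun x hx y hy a b ha hb hab => ?_⟩
  simp only [smul_eq_mul]
  rw [← integral_const_mul, ← integral_const_mul,
    ← integral_add ((hint x hx).const_mul a) ((hint y hy).const_mul b)]
  refine integral_mono_ae (((hint x hx).const_mul a).add ((hint y hy).const_mul b))
    (hint _ (hs hx hy ha hb hab)) ?_
  filter_upwards [hf] with u hu
  exact hu.2 hx hy ha hb hab

/-- The right-hand side is the tangent plane of the weighted geometric mean at `(A, B)`. -/
theorem rpow_mul_rpow_le_tangent {u s t A B : ℝ} (hu₀ : 0 ≤ u) (hu₁ : u ≤ 1)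
    (hs : 0 ≤ s) (ht : 0 ≤ t) (hA : 0 < A) (hB : 0 < B) :
    s ^ u * t ^ (1 - u) ≤ A ^ u * B ^ (1 - u) * (u * (s / A) + (1 - u) * (t / B)) := by
  have amgm := geom_mean_le_arith_mean2_weighted hu₀ (sub_nonneg.2 hu₁)
    (div_nonneg hs hA.le) (div_nonneg ht hB.le) (add_sub_cancel u 1)
  calc s ^ u * t ^ (1 - u) = A ^ u * B ^ (1 - u) * ((s / A) ^ u * (t / B) ^ (1 - u)) := by
        rw [div_rpow hs hA.le, div_rpow ht hB.le]
        field_simp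
    _ ≤ _ := mul_le_mul_of_nonneg_left amgm (by positivity)

theorem concaveOn_rpow_mul_rpow {u : ℝ} (hu₀ : 0 ≤ u) (hu₁ : u ≤ 1) :
    ConcaveOn ℝ (Ioi 0 ×ˢ Ioi 0) (fun q : ℝ × ℝ => q.1 ^ u * q.2 ^ (1 - u)) := by
  refine ⟨(convex_Ioi 0).prod (convex_Ioi 0), ?_⟩
  rintro ⟨s₁, t₁⟩ ⟨hs₁, ht₁⟩ ⟨s₂, t₂⟩ ⟨hs₂, ht₂⟩ a b ha hb hab
  simp only [mem_Ioi] at hs₁ ht₁ hs₂ ht₂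
  simp only [Prod.smul_mk, Prod.mk_add_mk, smul_eq_mul]
  set A := a * s₁ + b * s₂
  set B := a * t₁ + b * t₂
  have hA : 0 < A := convex_Ioi (0 : ℝ) hs₁ hs₂ ha hb hab
  have hB : 0 < B := convex_Ioi (0 : ℝ) ht₁ ht₂ ha hb hab
  have h₁ := rpow_mul_rpow_le_tangent hu₀ hu₁ hs₁.le ht₁.le hA hB
  have h₂ := rpow_mul_rpow_le_tangent hu₀ hu₁ hs₂.le ht₂.le hA hB
  have hsum : a * (u * (s₁ / A) + (1 - u) * (t₁ / B)) +
      b * (u * (s₂ / A) + (1 - u) * (t₂ / B)) = 1 := by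
    field_simp
    ring
  calc a * (s₁ ^ u * t₁ ^ (1 - u)) + b * (s₂ ^ u * t₂ ^ (1 - u))
      ≤ a * (A ^ u * B ^ (1 - u) * (u * (s₁ / A) + (1 - u) * (t₁ / B))) +
        b * (A ^ u * B ^ (1 - u) * (u * (s₂ / A) + (1 - u) * (t₂ / B))) := by gcongr
    _ = A ^ u * B ^ (1 - u) := by linear_combination (A ^ u * B ^ (1 - u)) * hsum

noncomputable def logMean (s t : ℝ) : ℝ :=
  if s = t then s else (s - t) / (log s - log t)

theorem hasDerivAt_rpow_mul_rpow {s t : ℝ} (hs : 0 < s) (ht : 0 < t) (u : ℝ) :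
    HasDerivAt (fun v => s ^ v * t ^ (1 - v)) (s ^ u * t ^ (1 - u) * (log s - log t)) u := by
  refine (((hasDerivAt_id u).const_rpow hs).mul
    (((hasDerivAt_id u).const_sub 1).const_rpow ht)).congr_deriv ?_
  simp only [id]
  ring

theorem continuous_rpow_mul_rpow {s t : ℝ} (hs : 0 < s) (ht : 0 < t) :
    Continuous fun u : ℝ => s ^ u * t ^ (1 - u) :=
  continuous_iff_continuousAt.2 fun u => (hasDerivAt_rpow_mul_rpow hs ht u).continuousAt

theorem logMean_eq_intervalIntegral {s t : ℝ} (hs : 0 < s) (ht : 0 < t) :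
    logMean s t = ∫ u in (0 : ℝ)..1, s ^ u * t ^ (1 - u) := by
  by_cases hst : s = t
  · subst hst
    simp [logMean, ← rpow_add hs]
  have hlog : log s - log t ≠ 0 := sub_ne_zero.2 fun h => hst (log_injOn_pos hs ht h)
  rw [logMean, if_neg hst, intervalIntegral.integral_eq_sub_of_hasDerivAt
    (f := fun u => s ^ u * t ^ (1 - u) / (log s - log t))
    (fun u _ => by
      simpa only [mul_div_cancel_right₀ _ hlog] using
        (hasDerivAt_rpow_mul_rpow hs ht u).div_const (log s - log t))
    ((continuous_rpow_mul_rpow hs ht).intervalIntegrable 0 1)]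
  simp only [rpow_one, rpow_zero, sub_zero, sub_self, mul_one, one_mul]
  ring

theorem concaveOn_logMean : ConcaveOn ℝ (Ioi 0 ×ˢ Ioi 0) fun q : ℝ × ℝ => logMean q.1 q.2 := by
  have hconcave : ConcaveOn ℝ (Ioi 0 ×ˢ Ioi 0)
      fun q : ℝ × ℝ => ∫ u in Ioc (0 : ℝ) 1, q.1 ^ u * q.2 ^ (1 - u) :=
    concaveOn_integral ((convex_Ioi 0).prod (convex_Ioi 0))
      (ae_restrict_of_forall_mem measurableSet_Ioc fun u hu =>
        concaveOn_rpow_mul_rpow hu.1.le hu.2)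
      fun q hq => (continuous_rpow_mul_rpow hq.1 hq.2).integrableOn_Ioc
  refine hconcave.congr fun q hq => ?_
  rw [logMean_eq_intervalIntegral hq.1 hq.2, intervalIntegral.integral_of_le zero_le_one]

theorem stmt6 :
    ConcaveOn ℝ {q : ℝ × ℝ | 0 < q.1 ∧ 0 < q.2}
      (fun q : ℝ × ℝ =>
        if q.1 = q.2 then q.1 else (q.1 - q.2) / (Real.log q.1 - Real.log q.2)) :=
  concaveOn_logMean
end

section
/- Let $X, Y$ be finite sets, $\mu, \tilde{\mu}$ probability measures on $X$, $\nu$ a probability measure on $Y$, and $\Gamma$ a coupling of $(\mu, \nu)$ (i.e., a probability measure on $X \times Y$ with marginals $\mu$ and $\nu$). Then there exists a coupling $\tilde{\Gamma}$ of $(\tilde{\mu}, \nu)$ such that the total variation distance between $\tilde{\Gamma}$ and $\Gamma$ equals the total variation distance between $\tilde{\mu}$ and $\mu$. -/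
/-!
Let `m = min μ μ'` be the common part of the two marginals. Shrinking each row `x` of `Γ` by the
factor `m x / μ x` gives a coupling of `m` with some `ν₀ ≤ ν`; the missing mass `μ' - m` and
`ν - ν₀` have the same total and are coupled independently. In each row only one of the two
corrections is nonzero (either `m x = μ x` or `m x = μ' x`), so the row contributes exactly
`|μ' x - μ x|` to the distance.
-/

open Finset

section Coupling

variable {X Y : Type*} [Fintype X] [Fintype Y]

def IsCoupling (μ : X → ℝ) (ν : Y → ℝ) (Γ : X → Y → ℝ) : Prop :=
  (∀ x y, 0 ≤ Γ x y) ∧ (∀ x, ∑ y, Γ x y = μ x) ∧ (∀ y, ∑ x, Γ x y = ν y)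

namespace IsCoupling

variable {μ μ' : X → ℝ} {ν ν' : Y → ℝ} {Γ Γ' : X → Y → ℝ}

theorem nonneg_fst (h : IsCoupling μ ν Γ) (x : X) : 0 ≤ μ x :=
  h.2.1 x ▸ sum_nonneg fun y _ => h.1 x y

theorem sum_fst_eq_sum_snd (h : IsCoupling μ ν Γ) : ∑ x, μ x = ∑ y, ν y := by
  simp only [← h.2.1, ← h.2.2]
  exact sum_comm

theorem add (h : IsCoupling μ ν Γ) (h' : IsCoupling μ' ν' Γ') :
    IsCoupling (μ + μ') (ν + ν') (Γ + Γ') :=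
  ⟨fun x y => add_nonneg (h.1 x y) (h'.1 x y),
    fun x => by simp [sum_add_distrib, h.2.1, h'.2.1],
    fun y => by simp [sum_add_distrib, h.2.2, h'.2.2]⟩

theorem exists_le_of_le (h : IsCoupling μ ν Γ) {m : X → ℝ} (hm0 : ∀ x, 0 ≤ m x)
    (hmμ : ∀ x, m x ≤ μ x) :
    ∃ Γ₀ : X → Y → ℝ, IsCoupling m (fun y => ∑ x, Γ₀ x y) Γ₀ ∧ ∀ x y, Γ₀ x y ≤ Γ x y := by
  have hratio : ∀ x, m x / μ x ≤ 1 := fun x => div_le_one_of_le₀ (hmμ x) (h.nonneg_fst x)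
  refine ⟨fun x y => Γ x y * (m x / μ x), ⟨fun x y => ?_, fun x => ?_, fun _ => rfl⟩, fun x y => ?_⟩
  · exact mul_nonneg (h.1 x y) (div_nonneg (hm0 x) (h.nonneg_fst x))
  · rw [← sum_mul, h.2.1, ← mul_div_assoc]
    exact mul_div_cancel_left_of_imp fun hμ => le_antisymm (hμ ▸ hmμ x) (hm0 x)
  · exact mul_le_of_le_one_right (h.1 x y) (hratio x)

end IsCoupling

/-- If the common mass is `0`, both `a` and `b` vanish, so the junk value of `/ 0` is harmless. -/
theorem isCoupling_mul_div_sum {a : X → ℝ} {b : Y → ℝ} (ha : ∀ x, 0 ≤ a x) (hb : ∀ y, 0 ≤ b y)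
    (hab : ∑ x, a x = ∑ y, b y) :
    IsCoupling a b (fun x y => a x * b y / ∑ x, a x) := by
  refine ⟨fun x y => div_nonneg (mul_nonneg (ha x) (hb y)) (sum_nonneg fun x _ => ha x),
    fun x => ?_, fun y => ?_⟩
  · rw [← sum_div, ← mul_sum, ← hab]
    refine mul_div_cancel_of_imp fun hs => ?_
    exact (sum_eq_zero_iff_of_nonneg fun x _ => ha x).1 hs x (mem_univ x)
  · rw [← sum_div, ← sum_mul, mul_div_cancel_left_of_imp fun hs => ?_]
    rw [hab] at hs
    exact (sum_eq_zero_iff_of_nonneg fun y _ => hb y).1 hs y (mem_univ y)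

end Coupling

theorem sum_abs_sub_eq_abs_sum_sub {Y : Type*} [Fintype Y] {p q : Y → ℝ} (hp : ∀ y, 0 ≤ p y)
    (hq : ∀ y, 0 ≤ q y) (h : min (∑ y, p y) (∑ y, q y) = 0) :
    ∑ y, |p y - q y| = |∑ y, p y - ∑ y, q y| := by
  rcases min_eq_iff.1 h with ⟨hp0, -⟩ | ⟨hq0, -⟩
  · have : ∀ y, p y = 0 := fun y => (sum_eq_zero_iff_of_nonneg fun y _ => hp y).1 hp0 y (mem_univ y)
    simp [this, abs_of_nonneg (hq _), abs_of_nonneg (sum_nonneg fun y _ => hq y)]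
  · have : ∀ y, q y = 0 := fun y => (sum_eq_zero_iff_of_nonneg fun y _ => hq y).1 hq0 y (mem_univ y)
    simp [this, abs_of_nonneg (hp _), abs_of_nonneg (sum_nonneg fun y _ => hp y)]

theorem IsCoupling.exists_sum_abs_sub_eq {X Y : Type*} [Fintype X] [Fintype Y]
    {μ μ' : X → ℝ} {ν : Y → ℝ} {Γ : X → Y → ℝ} (hΓ : IsCoupling μ ν Γ) (hμ'0 : ∀ x, 0 ≤ μ' x)
    (hμμ' : ∑ x, μ' x = ∑ x, μ x) :
    ∃ Γ' : X → Y → ℝ, IsCoupling μ' ν Γ' ∧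
      ∑ x, ∑ y, |Γ' x y - Γ x y| = ∑ x, |μ' x - μ x| := by
  set m : X → ℝ := fun x => min (μ x) (μ' x)
  have hm0 : ∀ x, 0 ≤ m x := fun x => le_min (hΓ.nonneg_fst x) (hμ'0 x)
  obtain ⟨Γ₀, hΓ₀, hΓ₀Γ⟩ := hΓ.exists_le_of_le hm0 fun x => min_le_left _ _
  set ν₀ : Y → ℝ := fun y => ∑ x, Γ₀ x y
  have hmass : ∑ x, (μ' - m) x = ∑ y, (ν - ν₀) y := by
    simp only [Pi.sub_apply, sum_sub_distrib, hμμ', hΓ.sum_fst_eq_sum_snd, hΓ₀.sum_fst_eq_sum_snd]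
  set π : X → Y → ℝ := fun x y => (μ' - m) x * (ν - ν₀) y / ∑ x, (μ' - m) x
  have hπ : IsCoupling (μ' - m) (ν - ν₀) π :=
    isCoupling_mul_div_sum (fun x => sub_nonneg.2 (min_le_right (μ x) (μ' x)))
      (fun y => sub_nonneg.2 <| (hΓ.2.2 y) ▸ sum_le_sum fun x _ => hΓ₀Γ x y) hmass
  refine ⟨Γ₀ + π, by simpa only [add_sub_cancel] using hΓ₀.add hπ, sum_congr rfl fun x _ => ?_⟩
  have hrow : ∑ y, |(Γ₀ + π) x y - Γ x y| = |∑ y, π x y - ∑ y, (Γ x y - Γ₀ x y)| := by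
    simp only [Pi.add_apply, show ∀ y, Γ₀ x y + π x y - Γ x y = π x y - (Γ x y - Γ₀ x y)
      from fun y => by ring]
    refine sum_abs_sub_eq_abs_sum_sub (hπ.1 x) (fun y => sub_nonneg.2 (hΓ₀Γ x y)) ?_
    rw [hπ.2.1, sum_sub_distrib, hΓ.2.1, hΓ₀.2.1, Pi.sub_apply, min_sub_sub_right, min_comm]
    exact sub_self _
  rw [hrow, hπ.2.1, sum_sub_distrib, hΓ.2.1, hΓ₀.2.1, Pi.sub_apply]
  congr 1
  ring

theorem stmt9_general {X Y : Type*} [Fintype X] [Fintype Y]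
    (μ μ' : X → ℝ) (ν : Y → ℝ)
    (hμ : (∀ x, 0 ≤ μ x) ∧ ∑ x, μ x = 1)
    (hμ' : (∀ x, 0 ≤ μ' x) ∧ ∑ x, μ' x = 1)
    (Γ : X → Y → ℝ)
    (hΓ : (∀ x y, 0 ≤ Γ x y) ∧ (∀ x, ∑ y, Γ x y = μ x) ∧ (∀ y, ∑ x, Γ x y = ν y)) :
    ∃ Γ' : X → Y → ℝ, (∀ x y, 0 ≤ Γ' x y) ∧ (∀ x, ∑ y, Γ' x y = μ' x) ∧
      (∀ y, ∑ x, Γ' x y = ν y) ∧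
      (1 / 2) * ∑ x, ∑ y, |Γ' x y - Γ x y| = (1 / 2) * ∑ x, |μ' x - μ x| := by
  obtain ⟨Γ', hΓ', hdist⟩ :=
    IsCoupling.exists_sum_abs_sub_eq (μ' := μ') hΓ hμ'.1 (hμ'.2.trans hμ.2.symm)
  exact ⟨Γ', hΓ'.1, hΓ'.2.1, hΓ'.2.2, by rw [hdist]⟩

theorem stmt9 {X Y : Type*} [Fintype X] [Fintype Y]
    (μ μ' : X → ℝ) (ν : Y → ℝ)
    (hμ : (∀ x, 0 ≤ μ x) ∧ ∑ x, μ x = 1)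
    (hμ' : (∀ x, 0 ≤ μ' x) ∧ ∑ x, μ' x = 1)
    (hν : (∀ y, 0 ≤ ν y) ∧ ∑ y, ν y = 1)
    (Γ : X → Y → ℝ)
    (hΓ : (∀ x y, 0 ≤ Γ x y) ∧ (∀ x, ∑ y, Γ x y = μ x) ∧ (∀ y, ∑ x, Γ x y = ν y)) :
    ∃ Γ' : X → Y → ℝ, (∀ x y, 0 ≤ Γ' x y) ∧ (∀ x, ∑ y, Γ' x y = μ' x) ∧
      (∀ y, ∑ x, Γ' x y = ν y) ∧
      (1 / 2) * ∑ x, ∑ y, |Γ' x y - Γ x y| = (1 / 2) * ∑ x, |μ' x - μ x| :=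
  stmt9_general μ μ' ν hμ hμ' Γ hΓ
end

section
/- For a finite metric space $(\Omega,d)$ with diameter $D$ and $p \geq 1$, $|W_p^p(\mu_1,\nu_1) - W_p^p(\mu_2,\nu_2)| \leq 2D^p(\|\mu_1-\mu_2\|_{TV} + \|\nu_1-\nu_2\|_{TV})$ for all probability measures $\mu_1,\mu_2,\nu_1,\nu_2$ on $\Omega$. -/
open Finset

lemma min_formula (u v : ℝ) : min u v = (u + v - |u - v|) / 2 := by
  rcases le_total u v with h | h
  · rw [min_eq_left h, abs_of_nonpos (by linarith)]; ring
  · rw [min_eq_right h, abs_of_nonneg (by linarith)]; ring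

lemma sum_min_eq {Ω : Type*} [Fintype Ω] (μ₁ μ₂ : Ω → ℝ)
    (h1 : ∑ x, μ₁ x = 1) (h2 : ∑ x, μ₂ x = 1) :
    ∑ x, min (μ₁ x) (μ₂ x) = 1 - (1/2) * ∑ x, |μ₁ x - μ₂ x| := by
  have : ∀ x, min (μ₁ x) (μ₂ x) = (μ₁ x + μ₂ x - |μ₁ x - μ₂ x|) / 2 :=
    fun x => min_formula _ _
  rw [Finset.sum_congr rfl (fun x _ => this x)]
  rw [← Finset.sum_div, Finset.sum_sub_distrib, Finset.sum_add_distrib, h1, h2]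
  ring

lemma couplingModify {Ω : Type*} [Fintype Ω]
    (d : Ω → Ω → ℝ) (hd : ∀ x y, 0 ≤ d x y)
    (D : ℝ) (hD0 : 0 ≤ D) (hD : ∀ x y, d x y ≤ D)
    (p : ℝ) (hp : 0 ≤ p)
    (μ₁ μ₂ ν₁ ν₂ : Ω → ℝ)
    (hμ₁ : (∀ x, 0 ≤ μ₁ x) ∧ ∑ x, μ₁ x = 1)
    (hμ₂ : (∀ x, 0 ≤ μ₂ x) ∧ ∑ x, μ₂ x = 1)
    (hν₁ : (∀ x, 0 ≤ ν₁ x) ∧ ∑ x, ν₁ x = 1)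
    (hν₂ : (∀ x, 0 ≤ ν₂ x) ∧ ∑ x, ν₂ x = 1)
    (Γ : Ω → Ω → ℝ) (hΓ0 : ∀ x y, 0 ≤ Γ x y)
    (hΓr : ∀ x, ∑ y, Γ x y = μ₂ x) (hΓc : ∀ y, ∑ x, Γ x y = ν₂ y) :
    ∃ Γ' : Ω → Ω → ℝ, (∀ x y, 0 ≤ Γ' x y) ∧ (∀ x, ∑ y, Γ' x y = μ₁ x) ∧
      (∀ y, ∑ x, Γ' x y = ν₁ y) ∧
      ∑ x, ∑ y, d x y ^ p * Γ' x y ≤ ∑ x, ∑ y, d x y ^ p * Γ x y +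
        D ^ p * ((1/2) * ∑ x, |μ₁ x - μ₂ x| + (1/2) * ∑ x, |ν₁ x - ν₂ x|) := by
  classical
  set a : Ω → ℝ := fun x => min (μ₁ x) (μ₂ x) with ha_def
  have ha0 : ∀ x, 0 ≤ a x := fun x => le_min (hμ₁.1 x) (hμ₂.1 x)
  have haμ₁ : ∀ x, a x ≤ μ₁ x := fun x => min_le_left _ _
  have haμ₂ : ∀ x, a x ≤ μ₂ x := fun x => min_le_right _ _
  set Γ₁ : Ω → Ω → ℝ := fun x y => Γ x y * (a x / μ₂ x) with hΓ₁_def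
  have hΓzero : ∀ x, μ₂ x = 0 → ∀ y, Γ x y = 0 := by
    intro x hx y
    have hs : ∑ y, Γ x y = 0 := by rw [hΓr x, hx]
    exact (Finset.sum_eq_zero_iff_of_nonneg (fun y _ => hΓ0 x y)).mp hs y (mem_univ y)
  have hΓ₁0 : ∀ x y, 0 ≤ Γ₁ x y := fun x y =>
    mul_nonneg (hΓ0 x y) (div_nonneg (ha0 x) (hμ₂.1 x))
  have hΓ₁le : ∀ x y, Γ₁ x y ≤ Γ x y := by
    intro x y
    rcases eq_or_lt_of_le (hμ₂.1 x) with h | h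
    · simp [hΓ₁_def, hΓzero x h.symm y]
    · have : a x / μ₂ x ≤ 1 := (div_le_one h).mpr (haμ₂ x)
      calc Γ x y * (a x / μ₂ x) ≤ Γ x y * 1 :=
        mul_le_mul_of_nonneg_left this (hΓ0 x y)
      _ = Γ x y := mul_one _
  have hΓ₁row : ∀ x, ∑ y, Γ₁ x y = a x := by
    intro x
    rw [show ∑ y, Γ₁ x y = (∑ y, Γ x y) * (a x / μ₂ x) by
      rw [Finset.sum_mul]]
    rw [hΓr x]
    rcases eq_or_lt_of_le (hμ₂.1 x) with h | h
    · have haz : a x = 0 := le_antisymm (by rw [h]; exact haμ₂ x) (ha0 x)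
      rw [← h, haz]; ring
    · rw [mul_div_assoc'] ; rw [mul_comm, mul_div_assoc, div_self (ne_of_gt h), mul_one]
  set c : Ω → ℝ := fun y => ∑ x, Γ₁ x y with hc_def
  have hc0 : ∀ y, 0 ≤ c y := fun y => Finset.sum_nonneg (fun x _ => hΓ₁0 x y)
  have hcν₂ : ∀ y, c y ≤ ν₂ y := by
    intro y
    calc c y ≤ ∑ x, Γ x y := Finset.sum_le_sum (fun x _ => hΓ₁le x y)
    _ = ν₂ y := hΓc y
  set b : Ω → ℝ := fun y => min (ν₁ y) (ν₂ y) with hb_def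
  have hb0 : ∀ y, 0 ≤ b y := fun y => le_min (hν₁.1 y) (hν₂.1 y)
  set m : Ω → ℝ := fun y => min (c y) (b y) with hm_def
  have hm0 : ∀ y, 0 ≤ m y := fun y => le_min (hc0 y) (hb0 y)
  have hmc : ∀ y, m y ≤ c y := fun y => min_le_left _ _
  have hmν₁ : ∀ y, m y ≤ ν₁ y := fun y => le_trans (min_le_right _ _) (min_le_left _ _)
  set Γ₂ : Ω → Ω → ℝ := fun x y => Γ₁ x y * (m y / c y) with hΓ₂_def
  have hΓ₁zero : ∀ y, c y = 0 → ∀ x, Γ₁ x y = 0 := by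
    intro y hy x
    exact (Finset.sum_eq_zero_iff_of_nonneg (fun x _ => hΓ₁0 x y)).mp hy x (mem_univ x)
  have hΓ₂0 : ∀ x y, 0 ≤ Γ₂ x y := fun x y =>
    mul_nonneg (hΓ₁0 x y) (div_nonneg (hm0 y) (hc0 y))
  have hΓ₂le : ∀ x y, Γ₂ x y ≤ Γ₁ x y := by
    intro x y
    rcases eq_or_lt_of_le (hc0 y) with h | h
    · simp [hΓ₂_def, hΓ₁zero y h.symm x]
    · have : m y / c y ≤ 1 := (div_le_one h).mpr (hmc y)
      calc Γ₁ x y * (m y / c y) ≤ Γ₁ x y * 1 :=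
        mul_le_mul_of_nonneg_left this (hΓ₁0 x y)
      _ = Γ₁ x y := mul_one _
  have hΓ₂col : ∀ y, ∑ x, Γ₂ x y = m y := by
    intro y
    rw [show ∑ x, Γ₂ x y = (∑ x, Γ₁ x y) * (m y / c y) by rw [Finset.sum_mul]]
    rcases eq_or_lt_of_le (hc0 y) with h | h
    · have hmz : m y = 0 := le_antisymm (by rw [h]; exact hmc y) (hm0 y)
      rw [show (∑ x, Γ₁ x y) = c y from rfl, ← h, hmz]; ring
    · rw [show (∑ x, Γ₁ x y) = c y from rfl]; field_simp
  set r : Ω → ℝ := fun x => ∑ y, Γ₂ x y with hr_def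
  have hr0 : ∀ x, 0 ≤ r x := fun x => Finset.sum_nonneg (fun y _ => hΓ₂0 x y)
  have hrμ₁ : ∀ x, r x ≤ μ₁ x := by
    intro x
    calc r x ≤ ∑ y, Γ₁ x y := Finset.sum_le_sum (fun y _ => hΓ₂le x y)
    _ = a x := hΓ₁row x
    _ ≤ μ₁ x := haμ₁ x
  set M : ℝ := ∑ y, m y with hM_def
  have hMr : ∑ x, r x = M := by
    rw [hM_def]
    calc ∑ x, r x = ∑ x, ∑ y, Γ₂ x y := rfl
    _ = ∑ y, ∑ x, Γ₂ x y := Finset.sum_comm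
    _ = ∑ y, m y := Finset.sum_congr rfl (fun y _ => hΓ₂col y)
  have hM1 : M ≤ 1 := by
    rw [hM_def, ← hν₁.2]
    exact Finset.sum_le_sum (fun y _ => hmν₁ y)
  -- key bound : 1 - M ≤ TVμ + TVν
  have hsumc : ∑ y, c y = ∑ x, a x := by
    calc ∑ y, c y = ∑ y, ∑ x, Γ₁ x y := rfl
    _ = ∑ x, ∑ y, Γ₁ x y := Finset.sum_comm
    _ = ∑ x, a x := Finset.sum_congr rfl (fun x _ => hΓ₁row x)
  have hsuma : ∑ x, a x = 1 - (1/2) * ∑ x, |μ₁ x - μ₂ x| :=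
    sum_min_eq μ₁ μ₂ hμ₁.2 hμ₂.2
  have hsumb : ∑ y, b y = 1 - (1/2) * ∑ y, |ν₁ y - ν₂ y| :=
    sum_min_eq ν₁ ν₂ hν₁.2 hν₂.2
  have hmlb : ∀ y, c y + b y - ν₂ y ≤ m y := by
    intro y
    have hmax : max (c y) (b y) ≤ ν₂ y := max_le (hcν₂ y) (min_le_right _ _)
    have := min_add_max (c y) (b y)
    rw [hm_def]; dsimp only; linarith
  have hkey : 1 - M ≤ (1/2) * ∑ x, |μ₁ x - μ₂ x| + (1/2) * ∑ x, |ν₁ x - ν₂ x| := by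
    have h1 : ∑ y, (c y + b y - ν₂ y) ≤ M := by
      rw [hM_def]; exact Finset.sum_le_sum (fun y _ => hmlb y)
    rw [Finset.sum_sub_distrib, Finset.sum_add_distrib, hsumc, hsuma, hsumb, hν₂.2] at h1
    linarith
  have hTV0 : (0:ℝ) ≤ (1/2) * ∑ x, |μ₁ x - μ₂ x| + (1/2) * ∑ x, |ν₁ x - ν₂ x| := by
    have h1 : (0:ℝ) ≤ ∑ x, |μ₁ x - μ₂ x| := Finset.sum_nonneg (fun x _ => abs_nonneg _)
    have h2 : (0:ℝ) ≤ ∑ x, |ν₁ x - ν₂ x| := Finset.sum_nonneg (fun x _ => abs_nonneg _)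
    linarith
  -- the filling coupling
  set q : Ω → Ω → ℝ := fun x y => (μ₁ x - r x) * (ν₁ y - m y) / (1 - M) with hq_def
  have hq0 : ∀ x y, 0 ≤ q x y := by
    intro x y
    apply div_nonneg (mul_nonneg (by linarith [hrμ₁ x]) (by linarith [hmν₁ y])) (by linarith)
  have hμr0 : M = 1 → ∀ x, μ₁ x = r x := by
    intro h x
    have hs : ∑ x, (μ₁ x - r x) = 0 := by
      rw [Finset.sum_sub_distrib, hμ₁.2, hMr, h]; ring
    have := (Finset.sum_eq_zero_iff_of_nonneg
      (fun x _ => by linarith [hrμ₁ x] : ∀ x ∈ univ, 0 ≤ μ₁ x - r x)).mp hs x (mem_univ x)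
    linarith
  have hνm0 : M = 1 → ∀ y, ν₁ y = m y := by
    intro h y
    have hs : ∑ y, (ν₁ y - m y) = 0 := by
      rw [Finset.sum_sub_distrib, hν₁.2, ← hM_def, h]; ring
    have := (Finset.sum_eq_zero_iff_of_nonneg
      (fun y _ => by linarith [hmν₁ y] : ∀ y ∈ univ, 0 ≤ ν₁ y - m y)).mp hs y (mem_univ y)
    linarith
  have hqrow : ∀ x, ∑ y, q x y = μ₁ x - r x := by
    intro x
    have : ∑ y, q x y = (μ₁ x - r x) * (1 - M) / (1 - M) := by
      rw [hq_def]
      simp only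
      rw [← Finset.sum_div, ← Finset.mul_sum, Finset.sum_sub_distrib, hν₁.2, ← hM_def]
    rw [this]
    by_cases h : M = 1
    · rw [h]; rw [hμr0 h x]; ring_nf
    · rw [mul_div_assoc, div_self (by intro hc; apply h; linarith), mul_one]
  have hqcol : ∀ y, ∑ x, q x y = ν₁ y - m y := by
    intro y
    have : ∑ x, q x y = (1 - M) * (ν₁ y - m y) / (1 - M) := by
      rw [hq_def]
      simp only
      rw [← Finset.sum_div, ← Finset.sum_mul, Finset.sum_sub_distrib, hμ₁.2, hMr]
    rw [this]
    by_cases h : M = 1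
    · rw [h]; rw [hνm0 h y]; ring_nf
    · rw [mul_comm, mul_div_assoc, div_self (by intro hc; apply h; linarith), mul_one]
  refine ⟨fun x y => Γ₂ x y + q x y, fun x y => add_nonneg (hΓ₂0 x y) (hq0 x y), ?_, ?_, ?_⟩
  · intro x
    rw [Finset.sum_add_distrib, hqrow x, hr_def]; ring
  · intro y
    rw [Finset.sum_add_distrib, hqcol y, hΓ₂col y]; ring
  · have hdp0 : ∀ x y, (0:ℝ) ≤ d x y ^ p := fun x y => Real.rpow_nonneg (hd x y) p
    have hdpD : ∀ x y, d x y ^ p ≤ D ^ p := fun x y =>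
      Real.rpow_le_rpow (hd x y) (hD x y) hp
    have hsplit : ∑ x, ∑ y, d x y ^ p * (Γ₂ x y + q x y)
        = (∑ x, ∑ y, d x y ^ p * Γ₂ x y) + ∑ x, ∑ y, d x y ^ p * q x y := by
      rw [← Finset.sum_add_distrib]
      apply Finset.sum_congr rfl
      intro x _
      rw [← Finset.sum_add_distrib]
      apply Finset.sum_congr rfl
      intro y _
      ring
    rw [hsplit]
    have h1 : ∑ x, ∑ y, d x y ^ p * Γ₂ x y ≤ ∑ x, ∑ y, d x y ^ p * Γ x y := by
      apply Finset.sum_le_sum; intro x _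
      apply Finset.sum_le_sum; intro y _
      exact mul_le_mul_of_nonneg_left (le_trans (hΓ₂le x y) (hΓ₁le x y)) (hdp0 x y)
    have h2 : ∑ x, ∑ y, d x y ^ p * q x y ≤ D ^ p * (1 - M) := by
      have hstep : ∑ x, ∑ y, d x y ^ p * q x y ≤ ∑ x, ∑ y, D ^ p * q x y := by
        apply Finset.sum_le_sum; intro x _
        apply Finset.sum_le_sum; intro y _
        exact mul_le_mul_of_nonneg_right (hdpD x y) (hq0 x y)
      have heq : ∑ x, ∑ y, D ^ p * q x y = D ^ p * (1 - M) := by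
        have : ∑ x, ∑ y, D ^ p * q x y = D ^ p * ∑ x, ∑ y, q x y := by
          rw [Finset.mul_sum]
          apply Finset.sum_congr rfl
          intro x _
          rw [Finset.mul_sum]
        rw [this]
        congr 1
        rw [Finset.sum_congr rfl (fun x _ => hqrow x), Finset.sum_sub_distrib, hμ₁.2, hMr]
      rw [heq] at hstep
      exact hstep
    have hDp0 : (0:ℝ) ≤ D ^ p := Real.rpow_nonneg hD0 p
    have h3 : D ^ p * (1 - M) ≤ D ^ p *
        ((1/2) * ∑ x, |μ₁ x - μ₂ x| + (1/2) * ∑ x, |ν₁ x - ν₂ x|) :=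
      mul_le_mul_of_nonneg_left hkey hDp0
    linarith

lemma oneSide {Ω : Type*} [Fintype Ω]
    (d : Ω → Ω → ℝ) (hd : ∀ x y, 0 ≤ d x y)
    (D : ℝ) (hD0 : 0 ≤ D) (hD : ∀ x y, d x y ≤ D)
    (p : ℝ) (hp : 0 ≤ p)
    (μ₁ μ₂ ν₁ ν₂ : Ω → ℝ)
    (hμ₁ : (∀ x, 0 ≤ μ₁ x) ∧ ∑ x, μ₁ x = 1)
    (hμ₂ : (∀ x, 0 ≤ μ₂ x) ∧ ∑ x, μ₂ x = 1)
    (hν₁ : (∀ x, 0 ≤ ν₁ x) ∧ ∑ x, ν₁ x = 1)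
    (hν₂ : (∀ x, 0 ≤ ν₂ x) ∧ ∑ x, ν₂ x = 1) :
    sInf {r : ℝ | ∃ Γ : Ω → Ω → ℝ,
      (∀ x y, 0 ≤ Γ x y) ∧ (∀ x, ∑ y, Γ x y = μ₁ x) ∧ (∀ y, ∑ x, Γ x y = ν₁ y) ∧
      r = ∑ x, ∑ y, d x y ^ p * Γ x y} ≤
    sInf {r : ℝ | ∃ Γ : Ω → Ω → ℝ,
      (∀ x y, 0 ≤ Γ x y) ∧ (∀ x, ∑ y, Γ x y = μ₂ x) ∧ (∀ y, ∑ x, Γ x y = ν₂ y) ∧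
      r = ∑ x, ∑ y, d x y ^ p * Γ x y} +
    D ^ p * ((1/2) * ∑ x, |μ₁ x - μ₂ x| + (1/2) * ∑ x, |ν₁ x - ν₂ x|) := by
  classical
  set S₁ := {r : ℝ | ∃ Γ : Ω → Ω → ℝ,
      (∀ x y, 0 ≤ Γ x y) ∧ (∀ x, ∑ y, Γ x y = μ₁ x) ∧ (∀ y, ∑ x, Γ x y = ν₁ y) ∧
      r = ∑ x, ∑ y, d x y ^ p * Γ x y} with hS₁
  set S₂ := {r : ℝ | ∃ Γ : Ω → Ω → ℝ,
      (∀ x y, 0 ≤ Γ x y) ∧ (∀ x, ∑ y, Γ x y = μ₂ x) ∧ (∀ y, ∑ x, Γ x y = ν₂ y) ∧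
      r = ∑ x, ∑ y, d x y ^ p * Γ x y} with hS₂
  have hbdd : BddBelow S₁ := by
    refine ⟨0, ?_⟩
    rintro r ⟨Γ, h0, -, -, rfl⟩
    exact Finset.sum_nonneg fun x _ => Finset.sum_nonneg fun y _ =>
      mul_nonneg (Real.rpow_nonneg (hd x y) p) (h0 x y)
  have hne₂ : S₂.Nonempty := by
    refine ⟨∑ x, ∑ y, d x y ^ p * (μ₂ x * ν₂ y), fun x y => μ₂ x * ν₂ y, ?_, ?_, ?_, rfl⟩
    · exact fun x y => mul_nonneg (hμ₂.1 x) (hν₂.1 y)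
    · intro x; rw [← Finset.mul_sum, hν₂.2, mul_one]
    · intro y; rw [← Finset.sum_mul, hμ₂.2, one_mul]
  rw [← sub_le_iff_le_add]
  apply le_csInf hne₂
  rintro r ⟨Γ, h0, hr, hc, rfl⟩
  obtain ⟨Γ', h0', hr', hc', hcost⟩ := couplingModify d hd D hD0 hD p hp μ₁ μ₂ ν₁ ν₂
    hμ₁ hμ₂ hν₁ hν₂ Γ h0 hr hc
  have hmem : (∑ x, ∑ y, d x y ^ p * Γ' x y) ∈ S₁ := ⟨Γ', h0', hr', hc', rfl⟩
  have := csInf_le hbdd hmem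
  linarith

theorem stmt11 {Ω : Type*} [Fintype Ω] [Nonempty Ω]
    (d : Ω → Ω → ℝ)
    (hd_nonneg : ∀ x y, 0 ≤ d x y)
    (hd_eq : ∀ x y, d x y = 0 ↔ x = y)
    (hd_symm : ∀ x y, d x y = d y x)
    (hd_tri : ∀ x y z, d x z ≤ d x y + d y z)
    (D : ℝ) (hD : ∀ x y, d x y ≤ D)
    (p : ℝ) (hp : 1 ≤ p)
    (Wpp : (Ω → ℝ) → (Ω → ℝ) → ℝ)
    (hW : ∀ μ ν, Wpp μ ν = sInf {r : ℝ | ∃ Γ : Ω → Ω → ℝ,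
      (∀ x y, 0 ≤ Γ x y) ∧ (∀ x, ∑ y, Γ x y = μ x) ∧ (∀ y, ∑ x, Γ x y = ν y) ∧
      r = ∑ x, ∑ y, d x y ^ p * Γ x y})
    (μ₁ μ₂ ν₁ ν₂ : Ω → ℝ)
    (hμ₁ : (∀ x, 0 ≤ μ₁ x) ∧ ∑ x, μ₁ x = 1)
    (hμ₂ : (∀ x, 0 ≤ μ₂ x) ∧ ∑ x, μ₂ x = 1)
    (hν₁ : (∀ x, 0 ≤ ν₁ x) ∧ ∑ x, ν₁ x = 1)
    (hν₂ : (∀ x, 0 ≤ ν₂ x) ∧ ∑ x, ν₂ x = 1) :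
    |Wpp μ₁ ν₁ - Wpp μ₂ ν₂| ≤
      2 * D ^ p * ((1 / 2) * ∑ x, |μ₁ x - μ₂ x| + (1 / 2) * ∑ x, |ν₁ x - ν₂ x|) := by
  obtain ⟨x₀⟩ := (inferInstance : Nonempty Ω)
  have hD0 : 0 ≤ D := le_trans (hd_nonneg x₀ x₀) (hD x₀ x₀)
  have hp0 : 0 ≤ p := le_trans zero_le_one hp
  have hDp0 : (0:ℝ) ≤ D ^ p := Real.rpow_nonneg hD0 p
  set T : ℝ := (1 / 2) * ∑ x, |μ₁ x - μ₂ x| + (1 / 2) * ∑ x, |ν₁ x - ν₂ x| with hT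
  have hT0 : 0 ≤ T := by
    have h1 : (0:ℝ) ≤ ∑ x, |μ₁ x - μ₂ x| := Finset.sum_nonneg (fun x _ => abs_nonneg _)
    have h2 : (0:ℝ) ≤ ∑ x, |ν₁ x - ν₂ x| := Finset.sum_nonneg (fun x _ => abs_nonneg _)
    rw [hT]; linarith
  have h12 : Wpp μ₁ ν₁ ≤ Wpp μ₂ ν₂ + D ^ p * T := by
    rw [hW, hW]
    exact oneSide d hd_nonneg D hD0 hD p hp0 μ₁ μ₂ ν₁ ν₂ hμ₁ hμ₂ hν₁ hν₂
  have h21 : Wpp μ₂ ν₂ ≤ Wpp μ₁ ν₁ + D ^ p * T := by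
    rw [hW, hW]
    have := oneSide d hd_nonneg D hD0 hD p hp0 μ₂ μ₁ ν₂ ν₁ hμ₂ hμ₁ hν₂ hν₁
    have e1 : ∑ x, |μ₂ x - μ₁ x| = ∑ x, |μ₁ x - μ₂ x| :=
      Finset.sum_congr rfl (fun x _ => abs_sub_comm _ _)
    have e2 : ∑ x, |ν₂ x - ν₁ x| = ∑ x, |ν₁ x - ν₂ x| :=
      Finset.sum_congr rfl (fun x _ => abs_sub_comm _ _)
    rw [e1, e2] at this
    exact this
  rw [abs_sub_le_iff]
  constructor
  · nlinarith [mul_nonneg hDp0 hT0]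
  · nlinarith [mul_nonneg hDp0 hT0]
end

section
/- In the setting above, the function $t \mapsto W_p^p(\delta_x \tilde{P}_t, \delta_y \tilde{P}_t)$ is linear (affine) on the interval $[0, T/2]$, where $T = (\max_z(-L(z,z)))^{-1}$. -/
/-!
Write `μ_t, ν_t` for the rows `x, y` of `I + t L`. Since `t ↦ μ_t` is affine,
`μ_{a s} = a μ_s + (1 - a) δ_x`, and likewise for `ν`, so `Γ ↦ a Γ + (1 - a) δ_{(x, y)}` sends
couplings of `(μ_s, ν_s)` to couplings of `(μ_{a s}, ν_{a s})` and the cost `r` to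
`a r + (1 - a) d(x, y)^p`. For `s = T / 2` every coupling of `(μ_t, ν_t)`, `t ≤ s`, puts mass
at least `μ_t(x) + ν_t(y) - 1 ≥ 1 - t / s` on `(x, y)`, so the map can be inverted without
losing nonnegativity. Hence the sets of transport costs at times `t` and `s` are affine images
of each other and `W_p^p` is affine on `[0, s]`.
-/
open Finset

section Coupling

variable {Ω : Type*} [Fintype Ω]

structure IsCoupling_s13 (μ ν : Ω → ℝ) (Γ : Ω → Ω → ℝ) : Prop where
  nonneg : ∀ v w, 0 ≤ Γ v w
  sum_fst : ∀ v, ∑ w, Γ v w = μ v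
  sum_snd : ∀ w, ∑ v, Γ v w = ν w

def transportCost (c Γ : Ω → Ω → ℝ) : ℝ := ∑ v, ∑ w, Γ v w * c v w

def couplingCosts (c : Ω → Ω → ℝ) (μ ν : Ω → ℝ) : Set ℝ :=
  transportCost c '' {Γ | IsCoupling_s13 μ ν Γ}

noncomputable def optimalCost (c : Ω → Ω → ℝ) (μ ν : Ω → ℝ) : ℝ := sInf (couplingCosts c μ ν)

variable {c Γ Γ' : Ω → Ω → ℝ} {μ ν μ' ν' : Ω → ℝ}

theorem transportCost_add_smul (a b : ℝ) :
    transportCost c (a • Γ + b • Γ') = a * transportCost c Γ + b * transportCost c Γ' := by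
  simp only [transportCost, Pi.add_apply, Pi.smul_apply, smul_eq_mul, mul_sum,
    ← sum_add_distrib]
  exact sum_congr rfl fun v _ => sum_congr rfl fun w _ => by ring

theorem apply_mul_le_transportCost (hc : ∀ v w, 0 ≤ c v w) (hΓ : ∀ v w, 0 ≤ Γ v w) (x y : Ω) :
    Γ x y * c x y ≤ transportCost c Γ := by
  have hterm : ∀ v w, 0 ≤ Γ v w * c v w := fun v w => mul_nonneg (hΓ v w) (hc v w)
  calc Γ x y * c x y ≤ ∑ w, Γ x w * c x w :=
        single_le_sum (fun w _ => hterm x w) (mem_univ y)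
    _ ≤ transportCost c Γ :=
        single_le_sum (f := fun v => ∑ w, Γ v w * c v w)
          (fun v _ => sum_nonneg fun w _ => hterm v w) (mem_univ x)

theorem bddBelow_couplingCosts (hc : ∀ v w, 0 ≤ c v w) : BddBelow (couplingCosts c μ ν) := by
  refine ⟨0, ?_⟩
  rintro _ ⟨Γ, hΓ, rfl⟩
  exact sum_nonneg fun v _ => sum_nonneg fun w _ => mul_nonneg (hΓ.nonneg v w) (hc v w)

theorem IsCoupling_s13.prod (hμ : 0 ≤ μ) (hν : 0 ≤ ν) (hμ1 : ∑ v, μ v = 1) (hν1 : ∑ w, ν w = 1) :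
    IsCoupling_s13 μ ν (fun v w => μ v * ν w) where
  nonneg v w := mul_nonneg (hμ v) (hν w)
  sum_fst v := by rw [← mul_sum, hν1, mul_one]
  sum_snd w := by rw [← sum_mul, hμ1, one_mul]

theorem IsCoupling_s13.smul_add_smul (hΓ : IsCoupling_s13 μ ν Γ) (hΓ' : IsCoupling_s13 μ' ν' Γ') {a b : ℝ}
    (hnonneg : ∀ v w, 0 ≤ a * Γ v w + b * Γ' v w) :
    IsCoupling_s13 (a • μ + b • μ') (a • ν + b • ν') (a • Γ + b • Γ') where
  nonneg := hnonneg
  sum_fst v := by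
    simp [sum_add_distrib, ← mul_sum, hΓ.sum_fst, hΓ'.sum_fst]
  sum_snd w := by
    simp [sum_add_distrib, ← mul_sum, hΓ.sum_snd, hΓ'.sum_snd]

/-- The Fréchet lower bound on the mass a coupling puts on a single pair. -/
theorem IsCoupling_s13.sub_le_apply (hΓ : IsCoupling_s13 μ ν Γ) (x y : Ω) :
    μ x + ν y - ∑ w, ν w ≤ Γ x y := by
  classical
  have hrest : ∑ w ∈ univ.erase y, Γ x w ≤ ∑ w ∈ univ.erase y, ν w :=
    sum_le_sum fun w _ => hΓ.sum_snd w ▸ single_le_sum (fun v _ => hΓ.nonneg v w) (mem_univ x)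
  have hx := add_sum_erase univ (Γ x) (mem_univ y)
  have hy := add_sum_erase univ ν (mem_univ y)
  rw [hΓ.sum_fst] at hx
  linarith

end Coupling

section DiracMixture

variable {Ω : Type*} [Fintype Ω] [DecidableEq Ω]
variable {c Γ : Ω → Ω → ℝ} {μ ν : Ω → ℝ} {x y : Ω} {a : ℝ}

def diracCoupling (x y : Ω) : Ω → Ω → ℝ :=
  fun v w => (Pi.single x 1 : Ω → ℝ) v * (Pi.single y 1 : Ω → ℝ) w

theorem isCoupling_diracCoupling (x y : Ω) :
    IsCoupling_s13 (Pi.single x 1) (Pi.single y 1) (diracCoupling x y) :=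
  IsCoupling_s13.prod (Pi.single_nonneg.2 zero_le_one) (Pi.single_nonneg.2 zero_le_one)
    (by simp) (by simp)

theorem transportCost_diracCoupling : transportCost c (diracCoupling x y) = c x y := by
  simp [transportCost, diracCoupling, Pi.single_apply]

theorem optimalCost_dirac (hc : ∀ v w, 0 ≤ c v w) :
    optimalCost c (Pi.single x 1) (Pi.single y 1) = c x y := by
  refine IsLeast.csInf_eq ⟨⟨_, isCoupling_diracCoupling x y, transportCost_diracCoupling⟩, ?_⟩
  rintro _ ⟨Γ, hΓ, rfl⟩
  have hxy : 1 ≤ Γ x y := by simpa using hΓ.sub_le_apply x y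
  calc c x y ≤ Γ x y * c x y := le_mul_of_one_le_left (hc x y) hxy
    _ ≤ transportCost c Γ := apply_mul_le_transportCost hc hΓ.nonneg x y

/-- The inverse map `Γ ↦ a⁻¹ • Γ + (1 - a⁻¹) • diracCoupling x y` stays nonnegative because `hμν`
makes the Fréchet bound at `(x, y)` of every coupling of the mixed marginals at least `1 - a`. -/
theorem couplingCosts_mix_dirac (hμν : ∑ w, ν w ≤ μ x + ν y) (ha0 : 0 < a) (ha1 : a ≤ 1) :
    couplingCosts c (a • μ + (1 - a) • Pi.single x 1) (a • ν + (1 - a) • Pi.single y 1)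
      = (fun r => a * r + (1 - a) * c x y) '' couplingCosts c μ ν := by
  have hD := isCoupling_diracCoupling (Ω := Ω) x y
  ext r
  constructor
  · rintro ⟨Γ', hΓ', rfl⟩
    have hmass : 1 - a ≤ Γ' x y := by
      have := hΓ'.sub_le_apply x y
      simp only [Pi.add_apply, Pi.smul_apply, smul_eq_mul, Pi.single_eq_same, sum_add_distrib,
        ← mul_sum, sum_pi_single', mem_univ, if_true] at this
      nlinarith [mul_nonneg ha0.le (sub_nonneg.2 hμν)]
    have hΓ := hΓ'.smul_add_smul hD (a := a⁻¹) (b := 1 - a⁻¹) fun v w => by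
      by_cases hvw : v = x ∧ w = y
      · obtain ⟨rfl, rfl⟩ := hvw
        have hid : a⁻¹ * Γ' v w + (1 - a⁻¹) * diracCoupling v w v w
            = a⁻¹ * (Γ' v w - (1 - a)) := by
          simp only [diracCoupling, Pi.single_eq_same]
          field_simp
          ring
        rw [hid]
        exact mul_nonneg (inv_nonneg.2 ha0.le) (sub_nonneg.2 hmass)
      · have hzero : diracCoupling x y v w = 0 := by
          rcases not_and_or.1 hvw with h | h <;> simp [diracCoupling, h]
        rw [hzero, mul_zero, add_zero]
        exact mul_nonneg (inv_nonneg.2 ha0.le) (hΓ'.nonneg v w)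
    have hinv : ∀ (m : Ω → ℝ) (z : Ω),
        a⁻¹ • (a • m + (1 - a) • Pi.single z 1) + (1 - a⁻¹) • Pi.single z 1 = m := by
      intro m z
      ext v
      simp only [Pi.add_apply, Pi.smul_apply, smul_eq_mul]
      field_simp
      ring
    rw [hinv, hinv] at hΓ
    refine ⟨_, ⟨_, hΓ, rfl⟩, ?_⟩
    simp only [transportCost_add_smul, transportCost_diracCoupling]
    field_simp
    ring
  · rintro ⟨_, ⟨Γ, hΓ, rfl⟩, rfl⟩
    refine ⟨_, hΓ.smul_add_smul hD fun v w => ?_, by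
      simp only [transportCost_add_smul, transportCost_diracCoupling]⟩
    exact add_nonneg (mul_nonneg ha0.le (hΓ.nonneg v w))
      (mul_nonneg (by linarith) (hD.nonneg v w))

theorem optimalCost_mix_dirac (hc : ∀ v w, 0 ≤ c v w) (hne : (couplingCosts c μ ν).Nonempty)
    (hμν : ∑ w, ν w ≤ μ x + ν y) (ha0 : 0 < a) (ha1 : a ≤ 1) :
    optimalCost c (a • μ + (1 - a) • Pi.single x 1) (a • ν + (1 - a) • Pi.single y 1)
      = a * optimalCost c μ ν + (1 - a) * c x y := by
  rw [optimalCost, couplingCosts_mix_dirac hμν ha0 ha1]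
  refine (Monotone.map_csInf_of_continuousAt (by fun_prop) ?_ hne
    (bddBelow_couplingCosts hc)).symm
  exact fun r s hrs => by gcongr

end DiracMixture

section EulerKernel

variable {Ω : Type*} [DecidableEq Ω] {L : Ω → Ω → ℝ}

/-- Row `x` of the matrix `P̃_t = I + t L`, i.e. `δ_x P̃_t`. -/
def eulerKernel (L : Ω → Ω → ℝ) (t : ℝ) (x : Ω) : Ω → ℝ := Pi.single x 1 + t • L x

theorem eulerKernel_apply (t : ℝ) (x v : Ω) :
    eulerKernel L t x v = (if v = x then 1 else 0) + t * L x v := by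
  simp [eulerKernel, Pi.single_apply]

theorem eulerKernel_zero (x : Ω) : eulerKernel L 0 x = Pi.single x 1 := by
  simp [eulerKernel]

theorem eulerKernel_mul (a u : ℝ) (x : Ω) :
    eulerKernel L (a * u) x = a • eulerKernel L u x + (1 - a) • Pi.single x 1 := by
  ext v
  simp only [eulerKernel, Pi.add_apply, Pi.smul_apply, smul_eq_mul]
  ring

theorem eulerKernel_nonneg (hoff : ∀ x y, x ≠ y → 0 ≤ L x y) {t : ℝ} (ht : 0 ≤ t) {x : Ω}
    (hdiag : t * -L x x ≤ 1) : 0 ≤ eulerKernel L t x := by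
  intro v
  by_cases hv : v = x
  · subst hv
    simp only [eulerKernel, Pi.add_apply, Pi.single_eq_same, Pi.smul_apply, smul_eq_mul,
      Pi.zero_apply]
    linarith
  · simpa [eulerKernel, Pi.single_apply, hv] using mul_nonneg ht (hoff x v (Ne.symm hv))

variable [Fintype Ω]

theorem sum_eulerKernel (hrow : ∑ v, L x v = 0) (t : ℝ) : ∑ v, eulerKernel L t x v = 1 := by
  simp [eulerKernel, sum_add_distrib, ← mul_sum, hrow]

theorem diag_nonpos_of_generator (hoff : ∀ x y, x ≠ y → 0 ≤ L x y) (hrow : ∀ x, ∑ y, L x y = 0)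
    (x : Ω) : L x x ≤ 0 := by
  have hsplit := add_sum_erase univ (L x) (mem_univ x)
  have hrest : 0 ≤ ∑ v ∈ univ.erase x, L x v :=
    sum_nonneg fun v hv => hoff x v (ne_of_mem_erase hv).symm
  linarith [hrow x]

theorem optimalCost_eulerKernel {c : Ω → Ω → ℝ} (hc : ∀ v w, 0 ≤ c v w)
    (hoff : ∀ x y, x ≠ y → 0 ≤ L x y) (hrow : ∀ x, ∑ y, L x y = 0) {x y : Ω} {s t : ℝ}
    (ht : 0 < t) (hts : t ≤ s) (hrate : s * (-L x x - L y y) ≤ 1) :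
    optimalCost c (eulerKernel L t x) (eulerKernel L t y)
      = t / s * optimalCost c (eulerKernel L s x) (eulerKernel L s y) + (1 - t / s) * c x y := by
  have hs : 0 < s := ht.trans_le hts
  have hx := diag_nonpos_of_generator hoff hrow x
  have hy := diag_nonpos_of_generator hoff hrow y
  have hsx : s * -L x x ≤ 1 := by nlinarith [mul_nonneg hs.le (neg_nonneg.2 hy)]
  have hsy : s * -L y y ≤ 1 := by nlinarith [mul_nonneg hs.le (neg_nonneg.2 hx)]
  have hne : (couplingCosts c (eulerKernel L s x) (eulerKernel L s y)).Nonempty :=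
    ⟨_, _, IsCoupling_s13.prod (eulerKernel_nonneg hoff hs.le hsx) (eulerKernel_nonneg hoff hs.le hsy)
      (sum_eulerKernel (hrow x) s) (sum_eulerKernel (hrow y) s), rfl⟩
  have hfrechet : ∑ w, eulerKernel L s y w ≤ eulerKernel L s x x + eulerKernel L s y y := by
    rw [sum_eulerKernel (hrow y), eulerKernel_apply, eulerKernel_apply, if_pos rfl, if_pos rfl]
    linarith
  have htime : t = t / s * s := (div_mul_cancel₀ t hs.ne').symm
  rw [htime, eulerKernel_mul, eulerKernel_mul, ← htime]
  exact optimalCost_mix_dirac hc hne hfrechet (div_pos ht hs) ((div_le_one hs).2 hts)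

theorem couplingCosts_eulerKernel (c : Ω → Ω → ℝ) (t : ℝ) (x y : Ω) :
    couplingCosts c (eulerKernel L t x) (eulerKernel L t y) = {r : ℝ | ∃ Γ : Ω → Ω → ℝ,
      (∀ v w, 0 ≤ Γ v w) ∧
      (∀ v, ∑ w, Γ v w = (if v = x then 1 else 0) + t * L x v) ∧
      (∀ w, ∑ v, Γ v w = (if w = y then 1 else 0) + t * L y w) ∧
      r = ∑ v, ∑ w, Γ v w * c v w} := by
  ext r
  constructor
  · rintro ⟨Γ, ⟨h0, h1, h2⟩, rfl⟩
    exact ⟨Γ, h0, fun v => (h1 v).trans (eulerKernel_apply t x v),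
      fun w => (h2 w).trans (eulerKernel_apply t y w), rfl⟩
  · rintro ⟨Γ, h0, h1, h2, rfl⟩
    exact ⟨Γ, ⟨h0, fun v => (h1 v).trans (eulerKernel_apply t x v).symm,
      fun w => (h2 w).trans (eulerKernel_apply t y w).symm⟩, rfl⟩

end EulerKernel

theorem stmt13_general {Ω : Type*} [Fintype Ω] [DecidableEq Ω] [Nonempty Ω]
    (L : Ω → Ω → ℝ)
    (hoff : ∀ x y, x ≠ y → 0 ≤ L x y)
    (hrow : ∀ x, ∑ y, L x y = 0)
    (d : Ω → Ω → ℝ)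
    (hd_nonneg : ∀ x y, 0 ≤ d x y)
    (p : ℝ)
    (x y : Ω)
    (T : ℝ)
    (hT : T = (Finset.univ.sup' Finset.univ_nonempty (fun z : Ω => -L z z))⁻¹)
    (W : ℝ → ℝ)
    (hW : ∀ t, W t = sInf {r : ℝ | ∃ Γ : Ω → Ω → ℝ,
      (∀ v w, 0 ≤ Γ v w) ∧
      (∀ v, ∑ w, Γ v w = (if v = x then 1 else 0) + t * L x v) ∧
      (∀ w, ∑ v, Γ v w = (if w = y then 1 else 0) + t * L y w) ∧
      r = ∑ v, ∑ w, Γ v w * d v w ^ p}) :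
    ∃ m c : ℝ, ∀ t ∈ Set.Icc 0 (T / 2), W t = m * t + c := by
  rcases le_or_gt T 0 with hT0 | hT0
  · refine ⟨0, W 0, fun t ⟨ht0, hts⟩ => ?_⟩
    rw [le_antisymm (by linarith) ht0, zero_mul, zero_add]
  have hW' : ∀ t,
      W t = optimalCost (fun v w => d v w ^ p) (eulerKernel L t x) (eulerKernel L t y) := by
    intro t
    rw [hW, optimalCost, couplingCosts_eulerKernel]
  have hc : ∀ v w, 0 ≤ d v w ^ p := fun v w => Real.rpow_nonneg (hd_nonneg v w) p
  have hrate : T / 2 * (-L x x - L y y) ≤ 1 := by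
    have hmax : ∀ z, -L z z ≤ T⁻¹ := fun z => by
      rw [hT, inv_inv]
      exact le_sup' (fun z => -L z z) (mem_univ z)
    have hTT : T / 2 * (2 * T⁻¹) = 1 := by field_simp
    nlinarith [hmax x, hmax y]
  refine ⟨(W (T / 2) - d x y ^ p) / (T / 2), d x y ^ p, ?_⟩
  rintro t ⟨ht0, hts⟩
  rcases ht0.eq_or_lt with rfl | htpos
  · rw [hW', eulerKernel_zero, eulerKernel_zero, optimalCost_dirac hc]
    ring
  rw [hW', optimalCost_eulerKernel hc hoff hrow htpos hts hrate, ← hW']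
  field_simp
  ring

theorem stmt13 {Ω : Type*} [Fintype Ω] [DecidableEq Ω] [Nonempty Ω]
    (L : Ω → Ω → ℝ)
    (hoff : ∀ x y, x ≠ y → 0 ≤ L x y)
    (hrow : ∀ x, ∑ y, L x y = 0)
    (d : Ω → Ω → ℝ)
    (hd_nonneg : ∀ x y, 0 ≤ d x y)
    (hd_eq : ∀ x y, d x y = 0 ↔ x = y)
    (hd_symm : ∀ x y, d x y = d y x)
    (hd_tri : ∀ x y z, d x z ≤ d x y + d y z)
    (p : ℝ) (hp : 1 ≤ p)
    (x y : Ω) (hxy : x ≠ y)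
    (T : ℝ)
    (hT : T = (Finset.univ.sup' Finset.univ_nonempty (fun z : Ω => -L z z))⁻¹)
    (W : ℝ → ℝ)
    (hW : ∀ t, W t = sInf {r : ℝ | ∃ Γ : Ω → Ω → ℝ,
      (∀ v w, 0 ≤ Γ v w) ∧
      (∀ v, ∑ w, Γ v w = (if v = x then 1 else 0) + t * L x v) ∧
      (∀ w, ∑ v, Γ v w = (if w = y then 1 else 0) + t * L y w) ∧
      r = ∑ v, ∑ w, Γ v w * d v w ^ p}) :
    ∃ m c : ℝ, ∀ t ∈ Set.Icc 0 (T / 2), W t = m * t + c :=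
  stmt13_general L hoff hrow d hd_nonneg p x y T hT W hW
end

section
/- Let $x \sim y$ (distance 1) in a finite graph-metric space, $P$ a stochastic matrix, and suppose there is a coupling $\Pi$ of $(\delta_x P, \delta_y P)$ supported on pairs $(w,z)$ with $d(w,z) \leq 1$ and satisfying $\sum_{w,z}\Pi(w,z)d(w,z) \leq 1-K$ for some $K \in [0,1]$. Then for every $p \in [1,\infty)$, $W_p(\delta_x P, \delta_y P) \leq 1 - K/p$. -/
/-! On the support of `Π` the integer distance is `0` or `1`, so `d ^ p = d` there and the `p`-cost
of `Π` equals its `1`-cost, which is at most `1 - K`. Hence `W_p ^ p ≤ 1 - K`, and Bernoulli's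
inequality `1 - K ≤ (1 - K / p) ^ p` finishes the proof. -/

open Finset

lemma Real.natCast_rpow_eq_self_of_le_one {n : ℕ} (hn : (n : ℝ) ≤ 1) {p : ℝ} (hp : p ≠ 0) :
    (n : ℝ) ^ p = n := by
  obtain rfl | rfl : n = 0 ∨ n = 1 := by
    have : n ≤ 1 := by exact_mod_cast hn
    omega
  · simp [Real.zero_rpow hp]
  · simp

lemma Real.one_sub_le_one_sub_div_rpow {K p : ℝ} (hKp : K ≤ p) (hp : 1 ≤ p) :
    1 - K ≤ (1 - K / p) ^ p := by
  have hp0 : 0 < p := zero_lt_one.trans_le hp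
  have hs : -1 ≤ -(K / p) := by
    rw [neg_le_neg_iff, div_le_one hp0]
    exact hKp
  have hbern := one_add_mul_self_le_rpow_one_add hs hp
  rwa [mul_neg, mul_div_cancel₀ K hp0.ne', ← sub_eq_add_neg, ← sub_eq_add_neg] at hbern

section Coupling

variable {Ω : Type*} [Fintype Ω] {d : Ω → Ω → ℝ}

lemma sum_sum_mul_rpow_eq_of_support_le_one (hd_int : ∀ x y, ∃ n : ℕ, d x y = n)
    {Γ : Ω → Ω → ℝ} (hsupp : ∀ w z, Γ w z ≠ 0 → d w z ≤ 1) {p : ℝ} (hp : p ≠ 0) :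
    ∑ w, ∑ z, Γ w z * d w z ^ p = ∑ w, ∑ z, Γ w z * d w z := by
  refine sum_congr rfl fun w _ => sum_congr rfl fun z _ => ?_
  by_cases hΓ : Γ w z = 0
  · simp [hΓ]
  · obtain ⟨n, hn⟩ := hd_int w z
    have hle := hsupp w z hΓ
    rw [hn] at hle ⊢
    rw [Real.natCast_rpow_eq_self_of_le_one hle hp]

lemma sum_sum_mul_rpow_nonneg (hd_int : ∀ x y, ∃ n : ℕ, d x y = n)
    {Γ : Ω → Ω → ℝ} (hΓ : ∀ v w, 0 ≤ Γ v w) (p : ℝ) :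
    0 ≤ ∑ v, ∑ w, Γ v w * d v w ^ p := by
  refine sum_nonneg fun v _ => sum_nonneg fun w _ => mul_nonneg (hΓ v w) (Real.rpow_nonneg ?_ p)
  obtain ⟨n, hn⟩ := hd_int v w
  exact hn ▸ n.cast_nonneg

end Coupling

theorem stmt16_general {Ω : Type*} [Fintype Ω]
    (d : Ω → Ω → ℝ)
    (hd_int : ∀ x y, ∃ n : ℕ, d x y = n)
    (P : Ω → Ω → ℝ)
    (x y : Ω)
    (K : ℝ) (hK : K ∈ Set.Icc (0 : ℝ) 1)
    (Pi : Ω → Ω → ℝ)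
    (hPi : (∀ w z, 0 ≤ Pi w z) ∧ (∀ w, ∑ z, Pi w z = P x w) ∧ (∀ z, ∑ w, Pi w z = P y z))
    (hsupp : ∀ w z, Pi w z ≠ 0 → d w z ≤ 1)
    (hmass : ∑ w, ∑ z, Pi w z * d w z ≤ 1 - K)
    (p : ℝ) (hp : 1 ≤ p)
    (W : (Ω → ℝ) → (Ω → ℝ) → ℝ)
    (hW : ∀ μ ν, W μ ν = (sInf {r : ℝ | ∃ Γ : Ω → Ω → ℝ,
      (∀ v w, 0 ≤ Γ v w) ∧ (∀ v, ∑ w, Γ v w = μ v) ∧ (∀ w, ∑ v, Γ v w = ν w) ∧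
      r = ∑ v, ∑ w, Γ v w * d v w ^ p}) ^ (1 / p)) :
    W (fun v => P x v) (fun v => P y v) ≤ 1 - K / p := by
  have hp0 : 0 < p := zero_lt_one.trans_le hp
  rw [hW]
  set S := {r : ℝ | ∃ Γ : Ω → Ω → ℝ,
      (∀ v w, 0 ≤ Γ v w) ∧ (∀ v, ∑ w, Γ v w = P x v) ∧ (∀ w, ∑ v, Γ v w = P y w) ∧
      r = ∑ v, ∑ w, Γ v w * d v w ^ p}
  have hS_nonneg : ∀ r ∈ S, 0 ≤ r := by
    rintro r ⟨Γ, hΓ, -, -, rfl⟩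
    exact sum_sum_mul_rpow_nonneg hd_int hΓ p
  have hPi_mem : ∑ w, ∑ z, Pi w z * d w z ^ p ∈ S := ⟨Pi, hPi.1, hPi.2.1, hPi.2.2, rfl⟩
  have hinf_le : sInf S ≤ 1 - K := calc
    sInf S ≤ ∑ w, ∑ z, Pi w z * d w z ^ p := csInf_le ⟨0, hS_nonneg⟩ hPi_mem
    _ = ∑ w, ∑ z, Pi w z * d w z := sum_sum_mul_rpow_eq_of_support_le_one hd_int hsupp hp0.ne'
    _ ≤ 1 - K := hmass
  have hKp : K ≤ p := hK.2.trans hp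
  have hrhs_nonneg : 0 ≤ 1 - K / p := sub_nonneg.2 ((div_le_one hp0).2 hKp)
  rw [one_div, Real.rpow_inv_le_iff_of_pos (le_csInf ⟨_, hPi_mem⟩ hS_nonneg) hrhs_nonneg hp0]
  exact hinf_le.trans (Real.one_sub_le_one_sub_div_rpow hKp hp)

theorem stmt16 {Ω : Type*} [Fintype Ω] [Nonempty Ω]
    (d : Ω → Ω → ℝ)
    (hd_nonneg : ∀ x y, 0 ≤ d x y)
    (hd_eq : ∀ x y, d x y = 0 ↔ x = y)
    (hd_symm : ∀ x y, d x y = d y x)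
    (hd_tri : ∀ x y z, d x z ≤ d x y + d y z)
    (hd_int : ∀ x y, ∃ n : ℕ, d x y = n)
    (P : Ω → Ω → ℝ)
    (hP : (∀ x y, 0 ≤ P x y) ∧ ∀ x, ∑ y, P x y = 1)
    (x y : Ω) (hxy : d x y = 1)
    (K : ℝ) (hK : K ∈ Set.Icc (0 : ℝ) 1)
    (Pi : Ω → Ω → ℝ)
    (hPi : (∀ w z, 0 ≤ Pi w z) ∧ (∀ w, ∑ z, Pi w z = P x w) ∧ (∀ z, ∑ w, Pi w z = P y z))
    (hsupp : ∀ w z, Pi w z ≠ 0 → d w z ≤ 1)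
    (hmass : ∑ w, ∑ z, Pi w z * d w z ≤ 1 - K)
    (p : ℝ) (hp : 1 ≤ p)
    (W : (Ω → ℝ) → (Ω → ℝ) → ℝ)
    (hW : ∀ μ ν, W μ ν = (sInf {r : ℝ | ∃ Γ : Ω → Ω → ℝ,
      (∀ v w, 0 ≤ Γ v w) ∧ (∀ v, ∑ w, Γ v w = μ v) ∧ (∀ w, ∑ v, Γ v w = ν w) ∧
      r = ∑ v, ∑ w, Γ v w * d v w ^ p}) ^ (1 / p)) :
    W (fun v => P x v) (fun v => P y v) ≤ 1 - K / p :=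
  stmt16_general d hd_int P x y K hK Pi hPi hsupp hmass p hp W hW
end

section
/- Let $Q$ be transition rates of a continuous-time Markov chain on a finite set $\Omega$, fix $x \neq y$, and let $C : \Omega \times \Omega \to \mathbb{R}_{\geq 0}$ be coupling rates, i.e., $\sum_w C(v,w) = Q(x,v)$ for all $v$ and $\sum_v C(v,w) = Q(y,w)$ for all $w$ (so in particular $\sum_{v,w}C(v,w) = \sum_v Q(x,v) = \sum_w Q(y,w) =: M$). Then for every $t$ with $0 < t \leq (M - C(x,y))^{-1}$, the function $\Gamma_t(v,w) := tC(v,w)$ for $(v,w) \neq (x,y)$ and $\Gamma_t(x,y) := 1 - Mt + C(x,y)t$ is a coupling of the probability measures $(\delta_x \tilde{P}_t, \delta_y \tilde{P}_t)$, where $\tilde{P}_t = I + tL$ and $L$ is the generator with rates $Q$. -/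
/-!
Away from the entry `(x, y)` the candidate coupling is `t • C`, whose marginals are
`t • Q x ·` and `t • Q y ·`; the mass `1 - M t + C x y t` placed at `(x, y)` adds
`1 - M t` to the `x`-row and the `y`-column, which is exactly the diagonal correction of
`I + t L`, because `M` is the total rate out of both `x` and `y`. Nonnegativity at `(x, y)`
is the step-size condition `t (M - C x y) ≤ 1`; the column marginals follow from the row
marginals of the transposed rates.
-/

open Finset

namespace EulerCoupling

variable {α β : Type*} [Fintype α] [Fintype β] [DecidableEq α] [DecidableEq β]

noncomputable def eulerCoupling (C : α → β → ℝ) (x : α) (y : β) (t : ℝ) (v : α) (w : β) : ℝ :=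
  if (v, w) = (x, y) then 1 - (∑ v, ∑ w, C v w) * t + C x y * t else t * C v w

theorem eulerCoupling_eq_add (C : α → β → ℝ) (x : α) (y : β) (t : ℝ) (v : α) (w : β) :
    eulerCoupling C x y t v w =
      t * C v w + if v = x ∧ w = y then 1 - (∑ v, ∑ w, C v w) * t else 0 := by
  unfold eulerCoupling
  by_cases h : v = x ∧ w = y
  · obtain ⟨rfl, rfl⟩ := h
    simp only [and_self, if_true]
    ring
  · simp only [Prod.mk.injEq, h, if_false, add_zero]

theorem eulerCoupling_nonneg {C : α → β → ℝ} (hC : ∀ v w, 0 ≤ C v w) {x : α} {y : β} {t : ℝ}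
    (ht : 0 ≤ t) (ht' : t * ((∑ v, ∑ w, C v w) - C x y) ≤ 1) (v : α) (w : β) :
    0 ≤ eulerCoupling C x y t v w := by
  unfold eulerCoupling
  split_ifs
  · linarith
  · exact mul_nonneg ht (hC v w)

theorem sum_eulerCoupling_left (C : α → β → ℝ) (x : α) (y : β) (t : ℝ) (v : α) :
    ∑ w, eulerCoupling C x y t v w =
      (if v = x then 1 else 0) + t * (∑ w, C v w - if v = x then ∑ v, ∑ w, C v w else 0) := by
  simp only [eulerCoupling_eq_add, sum_add_distrib, ← mul_sum]
  by_cases hv : v = x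
  · simp only [hv, true_and, sum_ite_eq', mem_univ, if_true]
    ring
  · simp [hv]

theorem eulerCoupling_transpose (C : α → β → ℝ) (x : α) (y : β) (t : ℝ) (v : α) (w : β) :
    eulerCoupling (fun w v ↦ C v w) y x t w v = eulerCoupling C x y t v w := by
  simp only [eulerCoupling, Prod.mk.injEq, and_comm (a := w = y), sum_comm (γ := β)]

theorem sum_eulerCoupling_right (C : α → β → ℝ) (x : α) (y : β) (t : ℝ) (w : β) :
    ∑ v, eulerCoupling C x y t v w =
      (if w = y then 1 else 0) + t * (∑ v, C v w - if w = y then ∑ v, ∑ w, C v w else 0) := by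
  simp only [← eulerCoupling_transpose C x y t, sum_eulerCoupling_left]
  rw [sum_comm (γ := β)]

end EulerCoupling

open EulerCoupling

theorem stmt18_general {Ω : Type*} [Fintype Ω] [DecidableEq Ω]
    (Q : Ω → Ω → ℝ)
    (x y : Ω)
    (C : Ω → Ω → ℝ) (hC : ∀ v w, 0 ≤ C v w)
    (hC1 : ∀ v, ∑ w, C v w = Q x v)
    (hC2 : ∀ w, ∑ v, C v w = Q y w)
    (M : ℝ) (hM : M = ∑ v, ∑ w, C v w)
    (t : ℝ) (ht : 0 < t) (ht' : t * (M - C x y) ≤ 1)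
    (Γ : Ω → Ω → ℝ)
    (hΓ : ∀ v w, Γ v w = if (v, w) = (x, y) then 1 - M * t + C x y * t else t * C v w) :
    (∀ v w, 0 ≤ Γ v w) ∧
    (∀ v, ∑ w, Γ v w = (if v = x then 1 else 0) + t * (Q x v - (if v = x then ∑ w, Q x w else 0))) ∧
    (∀ w, ∑ v, Γ v w = (if w = y then 1 else 0) + t * (Q y w - (if w = y then ∑ v, Q y v else 0))) := by
  subst hM
  have hΓC : Γ = eulerCoupling C x y t := funext₂ hΓ
  have hMx : ∑ v, ∑ w, C v w = ∑ w, Q x w := sum_congr rfl fun v _ ↦ hC1 v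
  have hMy : ∑ v, ∑ w, C v w = ∑ w, Q y w := by
    rw [sum_comm]; exact sum_congr rfl fun w _ ↦ hC2 w
  subst hΓC
  refine ⟨eulerCoupling_nonneg hC ht.le ht', fun v ↦ ?_, fun w ↦ ?_⟩
  · rw [sum_eulerCoupling_left, hC1, hMx]
  · rw [sum_eulerCoupling_right, hC2, hMy]

theorem stmt18 {Ω : Type*} [Fintype Ω] [DecidableEq Ω]
    (Q : Ω → Ω → ℝ) (hQ : ∀ v w, 0 ≤ Q v w)
    (x y : Ω) (hxy : x ≠ y)
    (C : Ω → Ω → ℝ) (hC : ∀ v w, 0 ≤ C v w)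
    (hC1 : ∀ v, ∑ w, C v w = Q x v)
    (hC2 : ∀ w, ∑ v, C v w = Q y w)
    (M : ℝ) (hM : M = ∑ v, ∑ w, C v w)
    (t : ℝ) (ht : 0 < t) (ht' : t * (M - C x y) ≤ 1)
    (Γ : Ω → Ω → ℝ)
    (hΓ : ∀ v w, Γ v w = if (v, w) = (x, y) then 1 - M * t + C x y * t else t * C v w) :
    (∀ v w, 0 ≤ Γ v w) ∧
    (∀ v, ∑ w, Γ v w = (if v = x then 1 else 0) + t * (Q x v - (if v = x then ∑ w, Q x w else 0))) ∧
    (∀ w, ∑ v, Γ v w = (if w = y then 1 else 0) + t * (Q y w - (if w = y then ∑ v, Q y v else 0))) :=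
  stmt18_general Q x y C hC hC1 hC2 M hM t ht ht' Γ hΓ
end
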